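/- Suppose n and d(n) are both highly composite, where n has largest prime factor p_r ≥ 13 and d(n) has largest prime factor q_s. Then q_s < p_r. -/
import Mathlib


/-- `d n`: number of positive divisors of `n`. -/
def d (n : ℕ) : ℕ := (Nat.divisors n).card

/-- A positive integer `n` is highly composite if every smaller positive
integer has strictly fewer divisors. -/
def HighlyComposite (n : ℕ) : Prop :=
  0 < n ∧ ∀ m : ℕ, 0 < m → m < n → d m < d n

lemma d_pow {p : ℕ} (hp : p.Prime) (k : ℕ) : d (p ^ k) = k + 1 := by
  simp [d, Nat.divisors_prime_pow hp]

lemma d_mul {a b : ℕ} (h : Nat.Coprime a b) : d (a * b) = d a * d b :=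
  Nat.Coprime.card_divisors_mul h

lemma d_pos {n : ℕ} (hn : n ≠ 0) : 0 < d n := by
  unfold d
  rw [Finset.card_pos]
  exact ⟨n, Nat.mem_divisors_self n hn⟩

/-- For a highly composite number, exponents are nonincreasing in the prime. -/
lemma exp_mono {n p q : ℕ} (hn : HighlyComposite n) (hp : p.Prime) (hq : q.Prime)
    (hpq : p < q) : n.factorization q ≤ n.factorization p := by
  by_contra hcon
  push_neg at hcon
  set a := n.factorization p with ha
  set b := n.factorization q with hb
  have hn0 : n ≠ 0 := hn.1.ne'
  set c := ordCompl[q] (ordCompl[p] n) with hc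
  have hne : q ≠ p := (Nat.lt_iff_le_and_ne.mp hpq).2.symm
  have hcp0' : ordCompl[p] n ≠ 0 := (Nat.ordCompl_pos p hn0).ne'
  have hc0 : c ≠ 0 := (Nat.ordCompl_pos q hcp0').ne'
  have hfq : (ordCompl[p] n).factorization q = b := by
    rw [Nat.factorization_ordCompl, Finsupp.erase_ne hne]
  have hdecomp2 : ordCompl[p] n = q ^ b * c := by
    rw [← hfq]
    exact (Nat.ordProj_mul_ordCompl_eq_self (ordCompl[p] n) q).symm
  have hdecomp : n = p ^ a * (q ^ b * c) := by
    rw [← hdecomp2]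
    exact (Nat.ordProj_mul_ordCompl_eq_self n p).symm
  have hpc : ¬ p ∣ c := fun hd =>
    Nat.not_dvd_ordCompl hp hn0 (hd.trans (Nat.ordCompl_dvd (ordCompl[p] n) q))
  have hqc : ¬ q ∣ c := Nat.not_dvd_ordCompl hq hcp0'
  have hpqd : ¬ p ∣ q ^ b := fun hd => hne ((Nat.prime_dvd_prime_iff_eq hp hq).mp
    (hp.dvd_of_dvd_pow hd)).symm
  have hqpd : ¬ q ∣ p ^ b := fun hd => hne ((Nat.prime_dvd_prime_iff_eq hq hp).mp
    (hq.dvd_of_dvd_pow hd))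
  -- the swapped number
  set m := q ^ a * (p ^ b * c) with hm
  have hm0 : 0 < m :=
    Nat.mul_pos (pow_pos hq.pos a) (Nat.mul_pos (pow_pos hp.pos b) (Nat.pos_of_ne_zero hc0))
  -- d m = d n
  have cop1 : Nat.Coprime (p ^ a) (q ^ b * c) := by
    apply Nat.Coprime.pow_left
    exact (Nat.Prime.coprime_iff_not_dvd hp).mpr fun hd => by
      rcases (Nat.Prime.dvd_mul hp).mp hd with h | h
      · exact hpqd h
      · exact hpc h
  have cop2 : Nat.Coprime (q ^ b) c := by
    apply Nat.Coprime.pow_left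
    exact (Nat.Prime.coprime_iff_not_dvd hq).mpr hqc
  have cop3 : Nat.Coprime (q ^ a) (p ^ b * c) := by
    apply Nat.Coprime.pow_left
    exact (Nat.Prime.coprime_iff_not_dvd hq).mpr fun hd => by
      rcases (Nat.Prime.dvd_mul hq).mp hd with h | h
      · exact hqpd h
      · exact hqc h
  have cop4 : Nat.Coprime (p ^ b) c := by
    apply Nat.Coprime.pow_left
    exact (Nat.Prime.coprime_iff_not_dvd hp).mpr hpc
  have hdn : d n = (a + 1) * ((b + 1) * d c) := by
    rw [hdecomp, d_mul cop1, d_mul cop2, d_pow hp, d_pow hq]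
  have hdm : d m = (a + 1) * ((b + 1) * d c) := by
    rw [hm, d_mul cop3, d_mul cop4, d_pow hq, d_pow hp]
  -- m < n
  have hmn : m < n := by
    rw [hdecomp, hm]
    have key : q ^ a * p ^ b < p ^ a * q ^ b := by
      have hpb : p ^ b = p ^ a * p ^ (b - a) := by
        rw [← pow_add]; congr 1; omega
      have hqb : q ^ b = q ^ a * q ^ (b - a) := by
        rw [← pow_add]; congr 1; omega
      have hlt : p ^ (b - a) < q ^ (b - a) :=
        Nat.pow_lt_pow_left hpq (by omega)
      have hXpos : 0 < p ^ a * q ^ a := Nat.mul_pos (pow_pos hp.pos a) (pow_pos hq.pos a)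
      calc q ^ a * p ^ b = p ^ (b - a) * (p ^ a * q ^ a) := by rw [hpb]; ring
        _ < q ^ (b - a) * (p ^ a * q ^ a) :=
            Nat.mul_lt_mul_of_lt_of_le hlt le_rfl hXpos
        _ = p ^ a * q ^ b := by rw [hqb]; ring
    calc q ^ a * (p ^ b * c) = (q ^ a * p ^ b) * c := by ring
      _ < (p ^ a * q ^ b) * c :=
          Nat.mul_lt_mul_of_lt_of_le key le_rfl (Nat.pos_of_ne_zero hc0)
      _ = p ^ a * (q ^ b * c) := by ring
  have := hn.2 m hm0 hmn
  omega

/-- Swap lemma bounding the exponent of 2 in a highly composite number. -/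
lemma two_exp_bound {n P b : ℕ} (hn : HighlyComposite n) (hP : P.Prime)
    (hPn : ¬ P ∣ n) (hP2 : 2 < P) (hb : 1 ≤ b) (hPb : P < 2 ^ b) :
    n.factorization 2 + 2 ≤ 2 * b := by
  by_contra hcon
  push_neg at hcon
  set a := n.factorization 2 with ha
  have hab : 2 * b ≤ a + 1 := by omega
  have hba : b ≤ a := by omega
  have hn0 : n ≠ 0 := hn.1.ne'
  set c := ordCompl[2] n with hc
  have hc0 : c ≠ 0 := (Nat.ordCompl_pos 2 hn0).ne'
  have hdecomp : n = 2 ^ a * c := (Nat.ordProj_mul_ordCompl_eq_self n 2).symm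
  have h2c : ¬ 2 ∣ c := Nat.not_dvd_ordCompl Nat.prime_two hn0
  have hPc : ¬ P ∣ c := fun hd => hPn (hd.trans (Nat.ordCompl_dvd n 2))
  have h2P : ¬ (2 : ℕ) ∣ P := fun hd =>
    (Nat.Prime.eq_one_or_self_of_dvd hP 2 hd).elim (by omega) (by omega)
  set m := 2 ^ (a - b) * (P * c) with hm
  have hm0 : 0 < m :=
    Nat.mul_pos (pow_pos two_pos (a - b)) (Nat.mul_pos hP.pos (Nat.pos_of_ne_zero hc0))
  have cop1 : Nat.Coprime (2 ^ (a - b)) (P * c) := by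
    apply Nat.Coprime.pow_left
    exact (Nat.Prime.coprime_iff_not_dvd Nat.prime_two).mpr fun hd => by
      rcases (Nat.Prime.dvd_mul Nat.prime_two).mp hd with h | h
      · exact h2P h
      · exact h2c h
  have cop2 : Nat.Coprime P c := (Nat.Prime.coprime_iff_not_dvd hP).mpr hPc
  have cop3 : Nat.Coprime (2 ^ a) c := by
    apply Nat.Coprime.pow_left
    exact (Nat.Prime.coprime_iff_not_dvd Nat.prime_two).mpr h2c
  have hdm : d m = (a - b + 1) * (2 * d c) := by
    have hdP : d P = 2 := by
      have := d_pow hP 1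
      simpa using this
    rw [hm, d_mul cop1, d_mul cop2, d_pow Nat.prime_two, hdP]
  have hdn : d n = (a + 1) * d c := by
    rw [hdecomp, d_mul cop3, d_pow Nat.prime_two]
  have hmn : m < n := by
    rw [hdecomp, hm]
    have key : 2 ^ (a - b) * P < 2 ^ (a - b) * 2 ^ b := by
      calc 2 ^ (a - b) * P = P * 2 ^ (a - b) := by ring
        _ < 2 ^ b * 2 ^ (a - b) :=
            Nat.mul_lt_mul_of_lt_of_le hPb le_rfl (pow_pos two_pos _)
        _ = 2 ^ (a - b) * 2 ^ b := by ring
    calc 2 ^ (a - b) * (P * c) = (2 ^ (a - b) * P) * c := by ring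
      _ < (2 ^ (a - b) * 2 ^ b) * c :=
          Nat.mul_lt_mul_of_lt_of_le key le_rfl (Nat.pos_of_ne_zero hc0)
      _ = 2 ^ a * c := by rw [← pow_add]; congr 2; omega
  have hlt := hn.2 m hm0 hmn
  rw [hdm, hdn] at hlt
  have hdc : 0 < d c := d_pos hc0
  have h1 : (2 * (a - b + 1)) * d c < (a + 1) * d c := by
    calc (2 * (a - b + 1)) * d c = (a - b + 1) * (2 * d c) := by ring
      _ < (a + 1) * d c := hlt
  have := Nat.lt_of_mul_lt_mul_right h1
  omega

lemma pow_aux {k : ℕ} (h : 6 ≤ k) : 4 * k + 2 < 2 ^ k := by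
  induction k with
  | zero => omega
  | succ m ih =>
    rcases Nat.lt_or_ge m 6 with h' | h'
    · have : m = 5 := by omega
      subst this; norm_num
    · have := ih h'
      rw [pow_succ]
      omega

/-- If n and d(n) are both highly composite, with largest prime factors
p_r ≥ 13 and q_s respectively, then q_s < p_r. -/
theorem stmt_8 (n : ℕ) (hn : HighlyComposite n) (hdn : HighlyComposite (d n))
    (pr : ℕ) (hpr : pr.Prime) (hprdvd : pr ∣ n)
    (hprmax : ∀ q : ℕ, q.Prime → q ∣ n → q ≤ pr) (h13 : 13 ≤ pr)
    (qs : ℕ) (hqs : qs.Prime) (hqsdvd : qs ∣ d n)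
    (hqsmax : ∀ q : ℕ, q.Prime → q ∣ d n → q ≤ qs) :
    qs < pr := by
  by_contra hcon
  push_neg at hcon
  have hn0 : n ≠ 0 := hn.1.ne'
  -- qs divides some (exponent + 1)
  obtain ⟨p, hpmem, hpdvd⟩ : ∃ p ∈ n.primeFactors, qs ∣ n.factorization p + 1 := by
    have hcard : d n = n.primeFactors.prod (n.factorization · + 1) := Nat.card_divisors hn0
    rw [hcard] at hqsdvd
    exact hqs.prime.exists_mem_finset_dvd hqsdvd
  have hpprime : p.Prime := Nat.prime_of_mem_primeFactors hpmem
  have hexp : qs ≤ n.factorization p + 1 :=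
    Nat.le_of_dvd (by omega) hpdvd
  -- exponent of 2 is at least exponent of p
  have h2exp : qs ≤ n.factorization 2 + 1 := by
    rcases eq_or_ne p 2 with rfl | hp2
    · exact hexp
    · have h2p : 2 < p := lt_of_le_of_ne hpprime.two_le (Ne.symm hp2)
      have := exp_mono hn Nat.prime_two hpprime h2p
      omega
  -- Bertrand: a prime P with pr < P ≤ 2 * pr
  obtain ⟨P, hPp, hPgt, hPle⟩ := Nat.exists_prime_lt_and_le_two_mul pr hpr.ne_zero
  have hPn : ¬ P ∣ n := fun hd => absurd (hprmax P hPp hd) (by omega)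
  -- pr is odd, set b = (pr - 1) / 2
  have hodd : Odd pr := hpr.odd_of_ne_two (by omega)
  obtain ⟨b, hb⟩ := hodd
  have hb6 : 6 ≤ b := by omega
  have hPb : P < 2 ^ b := by
    have h1 : P ≤ 4 * b + 2 := by omega
    have h2 : 4 * b + 2 < 2 ^ b := pow_aux hb6
    omega
  have hbound := two_exp_bound hn hPp hPn (by omega) (by omega) hPb
  omega
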